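/- arXiv:math/9910161 — 2 statements merged into one kernel-verified Lean document; each statement's English description precedes it below -/
import Mathlib

section
/- Let R be a subring of ℚ and let G = ⋃_{α<ω₁} G_α be a filtration of type I of an ℵ₁-free R-module G of cardinality ℵ₁. For α ≤ ω₁ let 0 → H⁰ → H_α →^{h_α} G_α → 0 be a continuous increasing chain of short exact sequences of R-modules (H_α increasing, h_α extending one another, unions at limits) with union 0 → H⁰ → H →^h G → 0, where H⁰ is isomorphic to G (hence ℵ₁-free). Then any splitting map of the sequence 0 → H⁰ → H₁ →^{h₁} G₁ → 0 has at most one extension to a splitting map of 0 → H⁰ → H →^h G → 0; that is, if σ, σ' : G → H satisfy σ∘h = σ'∘h = id_G (as maps G → G, with maps acting so that σ h means h applied after σ) and σ and σ' agree on G₁, then σ = σ'. -/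
noncomputable section

open Cardinal

universe u v

/-- `ω₁`, the first uncountable ordinal. -/
def omegaOne : Ordinal.{0} := (Cardinal.aleph 1).ord

/-- The nucleus of an abelian group `G`: the subring of `ℚ` generated by all `1/p`
(`p` prime) such that `G` is `p`-divisible. -/
def nucleus (G : Type v) [AddCommGroup G] : Subring ℚ :=
  Subring.closure
    {x : ℚ | ∃ p : ℕ, p.Prime ∧ (∀ g : G, ∃ h : G, (p : ℤ) • h = g) ∧ x = (p : ℚ)⁻¹}

/-- A torsion-free additive abelian group. -/
def TorsionFreeGrp (G : Type v) [AddCommGroup G] : Prop :=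
  ∀ (n : ℤ) (g : G), n • g = 0 → n = 0 ∨ g = 0

/-- An `R`-module `G` is a splitter if every short exact sequence
`0 → G → X → G → 0` of `R`-modules splits. -/
def IsSplitter (R : Type u) [CommRing R] (G : Type v) [AddCommGroup G] [Module R G] : Prop :=
  ∀ (X : Type v) [AddCommGroup X] [Module R X],
    ∀ (β : G →ₗ[R] X) (α : X →ₗ[R] G),
      Function.Injective β → Function.Surjective α →
        LinearMap.range β = LinearMap.ker α →
        ∃ γ : G →ₗ[R] X, α.comp γ = LinearMap.id

/-- An abelian group `G` is a splitter if every short exact sequence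
`0 → G → X → G → 0` of abelian groups splits. -/
def IsGroupSplitter (G : Type v) [AddCommGroup G] : Prop :=
  ∀ (X : Type v) [AddCommGroup X],
    ∀ (β : G →+ X) (α : X →+ G),
      Function.Injective β → Function.Surjective α →
        β.range = α.ker →
        ∃ γ : G →+ X, α.comp γ = AddMonoidHom.id G

/-- An `R`-module is `ℵ₁`-free if every countably generated submodule is free. -/
def Aleph1Free (R : Type u) [CommRing R] (G : Type v) [AddCommGroup G] [Module R G] : Prop :=
  ∀ N : Submodule R G, (∃ S : Set G, S.Countable ∧ N = Submodule.span R S) →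
    Module.Free R N

variable {R : Type u} [CommRing R] {G : Type v} [AddCommGroup G] [Module R G]

/-- A pure submodule: divisibility by `r ∈ R` inside `G` descends to `N`. -/
def IsPureSub (N : Submodule R G) : Prop :=
  ∀ (r : R) (x : G), x ∈ N → (∃ g : G, x = r • g) → ∃ y ∈ N, x = r • y

/-- `N` is pure in the submodule `M`. -/
def IsPureIn (N M : Submodule R G) : Prop :=
  ∀ (r : R) (x : G), x ∈ N → (∃ g ∈ M, x = r • g) → ∃ y ∈ N, x = r • y

/-- A torsion-free module of finite rank which is not free, while all pure submodules
of strictly smaller rank are free. -/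
def MinimalNonFree (R : Type u) [CommRing R] (M : Type v) [AddCommGroup M] [Module R M] :
    Prop :=
  NoZeroSMulDivisors R M ∧ Module.rank R M < Cardinal.aleph0 ∧ ¬ Module.Free R M ∧
    ∀ N : Submodule R M, IsPureSub N → Module.rank R N < Module.rank R M → Module.Free R N

/-- The quotient `M / N` of two submodules of `G` (with `N ≤ M` intended). -/
abbrev SubQuot (N M : Submodule R G) : Type v :=
  ↥M ⧸ N.comap M.subtype

/-- An `ℵ₁`-filtration: an increasing chain of countable submodules, indexed by `ω₁`,
continuous at limits, whose union is `G`. -/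
structure IsAleph1Filtration (c : Ordinal.{0} → Submodule R G) : Prop where
  mono : ∀ ⦃α β : Ordinal.{0}⦄, α ≤ β → β < omegaOne → c α ≤ c β
  countable : ∀ α < omegaOne, (c α : Set G).Countable
  continuous : ∀ α < omegaOne, Order.IsSuccLimit α → c α = ⨆ β ∈ Set.Iio α, c β
  union : ∀ g : G, ∃ α < omegaOne, g ∈ c α

/-- A filtration of type I. -/
def IsTypeIFiltration (c : Ordinal.{0} → Submodule R G) : Prop :=
  IsAleph1Filtration c ∧
    (∀ α < omegaOne, IsPureSub (c α) ∧ Module.Free R (c α)) ∧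
    (∀ α : Ordinal.{0}, 0 < α → α < omegaOne →
      MinimalNonFree R (SubQuot (c α) (c (α + 1))))

/-- `G` is of type I. -/
def IsTypeI (R : Type u) [CommRing R] (G : Type v) [AddCommGroup G] [Module R G] : Prop :=
  ∃ c : Ordinal.{0} → Submodule R G, IsTypeIFiltration c

/-- `G` is of type II. -/
def IsTypeII (R : Type u) [CommRing R] (G : Type v) [AddCommGroup G] [Module R G] : Prop :=
  ∃ c : Ordinal.{0} → Submodule R G,
    IsAleph1Filtration c ∧
      (∀ α < omegaOne, IsPureSub (c α) ∧ Module.Free R (c α)) ∧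
      (∀ α < omegaOne, ¬ Order.IsSuccLimit α → Aleph1Free R (G ⧸ c α))

/-- `G` is of type III. -/
def IsTypeIII (R : Type u) [CommRing R] (G : Type v) [AddCommGroup G] [Module R G] : Prop :=
  ∃ c : Ordinal.{0} → Submodule R G,
    (∀ ⦃α β : Ordinal.{0}⦄, α ≤ β → β < omegaOne → c α ≤ c β) ∧
    (∀ α < omegaOne, Order.IsSuccLimit α → c α = ⨆ β ∈ Set.Iio α, c β) ∧
    (∀ α < omegaOne, IsPureSub (c α)) ∧
    (∀ g : G, ∃ α < omegaOne, g ∈ c α) ∧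
    c 0 = ⊥ ∧
    Cardinal.mk ↥(c 1) = Cardinal.aleph 1 ∧
    (∀ α < omegaOne, ¬ Order.IsSuccLimit α → Aleph1Free R (G ⧸ c α)) ∧
    ∃ d : Ordinal.{0} → Submodule R G,
      (∀ j < omegaOne, d j ≤ c 1) ∧
      (∀ ⦃i j : Ordinal.{0}⦄, i ≤ j → j < omegaOne → d i ≤ d j) ∧
      (∀ j < omegaOne, (d j : Set G).Countable) ∧
      (∀ j < omegaOne, Order.IsSuccLimit j → d j = ⨆ i ∈ Set.Iio j, d i) ∧
      (∀ g ∈ c 1, ∃ j < omegaOne, g ∈ d j) ∧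
      (∀ j < omegaOne, IsPureIn (d j) (c 1)) ∧
      (∀ j < omegaOne, MinimalNonFree R (SubQuot (d j) (d (j + 1))))

/-- Strongly `ℵ₁`-free. -/
def StronglyAleph1Free (R : Type u) [CommRing R] (G : Type v) [AddCommGroup G]
    [Module R G] : Prop :=
  ∀ S : Set G, S.Countable →
    ∃ B : Submodule R G, S ⊆ B ∧ (B : Set G).Countable ∧ IsPureSub B ∧
      Module.Free R B ∧ Aleph1Free R (G ⧸ B)

/-- `X` is contra-Whitehead in `G`. -/
def ContraWhitehead (X : Submodule R G) : Prop :=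
  ∃ (n : ℕ) (z : ℕ → G) (p : ℕ → R) (k : Fin n → ℕ → R),
    ¬ ∃ (y : ℕ → G) (a : Fin n → G),
        (LinearIndependent R fun i => X.mkQ (a i)) ∧
        IsPureSub (Submodule.span R (Set.range fun i => X.mkQ (a i))) ∧
        ∀ m : ℕ, p m • y (m + 1) - (y m + (∑ i, k i m • a i) + z m) ∈ X

/-- A closed unbounded subset of `ω₁`. -/
def IsClubIn (C : Set Ordinal.{0}) : Prop :=
  (∀ α, α < omegaOne → Order.IsSuccLimit α →
      (∀ β < α, ∃ γ ∈ C, β ≤ γ ∧ γ < α) → α ∈ C) ∧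
    (∀ β < omegaOne, ∃ γ ∈ C, β < γ ∧ γ < omegaOne)

/-- A stationary subset of `ω₁`. -/
def IsStationaryIn (S : Set Ordinal.{0}) : Prop :=
  ∀ C : Set Ordinal.{0}, IsClubIn C → (S ∩ C).Nonempty

/-- A torsion abelian group. -/
def IsTorsionGrp (G : Type v) [AddCommGroup G] : Prop :=
  ∀ g : G, ∃ n : ℕ, 0 < n ∧ n • g = 0

/-- A divisible subgroup. -/
def IsDivisibleSub {G : Type v} [AddCommGroup G] (D : AddSubgroup G) : Prop :=
  ∀ n : ℕ, 0 < n → ∀ x ∈ D, ∃ y ∈ D, n • y = x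

/-- A cotorsion abelian group: `Ext(A, C) = 0` for every torsion-free abelian group `A`. -/
def IsCotorsion (C : Type v) [AddCommGroup C] : Prop :=
  ∀ (A : Type v) [AddCommGroup A], TorsionFreeGrp A →
    ∀ (X : Type v) [AddCommGroup X],
      ∀ (β : C →+ X) (α : X →+ A),
        Function.Injective β → Function.Surjective α → β.range = α.ker →
        ∃ γ : A →+ X, α.comp γ = AddMonoidHom.id A

/-!
The difference `σ - σ'` takes values in `ker h ≅ G`, so it gives an endomorphism `ψ` of `G`
vanishing on `G₁`; we show by induction along the filtration that `ψ` kills every `G_α`.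
Limit steps are continuity. At a successor step `ψ` factors through the minimal non-free
quotient `G_{α+1}/G_α`, and its image is a countable submodule of the `ℵ₁`-free module `G`,
hence free. A nonzero map from a minimal non-free module `M` with free image splits `M` as
`ker ⊕ image`; the kernel is pure of strictly smaller finite rank, hence free, so `M` would be free.
-/

section

variable {M : Type*} {N : Type*}
  [AddCommGroup M] [Module R M] [AddCommGroup N] [Module R N]

theorem isPureSub_ker [NoZeroSMulDivisors R N] (φ : M →ₗ[R] N) : IsPureSub (LinearMap.ker φ) := by
  rintro r x hx ⟨g, rfl⟩
  rw [LinearMap.mem_ker, map_smul] at hx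
  rcases eq_zero_or_eq_zero_of_smul_eq_zero hx with rfl | hg
  · exact ⟨0, Submodule.zero_mem _, by simp⟩
  · exact ⟨g, hg, rfl⟩

theorem Cardinal.lt_add_of_lt_aleph0 {a b : Cardinal} (ha : a < Cardinal.aleph0) (hb : b ≠ 0) :
    a < a + b := by
  obtain ⟨n, rfl⟩ := Cardinal.lt_aleph0.mp ha
  calc (n : Cardinal) < n + 1 := by exact_mod_cast n.lt_succ_self
    _ ≤ n + b := add_le_add_right (Cardinal.one_le_iff_ne_zero.mpr hb) _

theorem MinimalNonFree.eq_zero_of_free_range [IsDomain R] [NoZeroSMulDivisors R N]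
    (hM : MinimalNonFree R M) (φ : M →ₗ[R] N) [Module.Free R (LinearMap.range φ)] : φ = 0 := by
  obtain ⟨-, hfin, hnotfree, hmin⟩ := hM
  by_contra hφ
  have hquot : Module.rank R (M ⧸ LinearMap.ker φ) ≠ 0 := by
    rwa [Ne, ← Cardinal.lift_eq_zero, φ.quotKerEquivRange.lift_rank_eq, Cardinal.lift_eq_zero,
      Submodule.rank_eq_zero, LinearMap.range_eq_bot]
  have : Module.Free R (LinearMap.ker φ) := hmin _ (isPureSub_ker φ) <| by
    calc Module.rank R (LinearMap.ker φ)
        < Module.rank R (LinearMap.ker φ) + Module.rank R (M ⧸ LinearMap.ker φ) :=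
          Cardinal.lt_add_of_lt_aleph0 ((Submodule.rank_le _).trans_lt hfin) hquot
      _ ≤ Module.rank R M := (add_comm _ _).trans_le (rank_quotient_add_rank_le _)
  obtain ⟨s, hs⟩ := Module.projective_lifting_property φ.rangeRestrict LinearMap.id
    φ.surjective_rangeRestrict
  obtain ⟨e, -⟩ := φ.rangeRestrict.exact_subtype_ker_map.splitSurjectiveEquiv
    (Submodule.injective_subtype _) ⟨s, hs⟩
  rw [LinearMap.ker_rangeRestrict] at e
  exact hnotfree (Module.Free.of_equiv e.symm)

theorem Aleph1Free.noZeroSMulDivisors [IsDomain R] (hM : Aleph1Free R M) :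
    NoZeroSMulDivisors R M := by
  refine ⟨fun {r g} hrg => ?_⟩
  have : Module.Free R (R ∙ g) := hM _ ⟨{g}, Set.countable_singleton g, rfl⟩
  simpa using smul_eq_zero.mp
    (Subtype.ext hrg : r • (⟨g, Submodule.mem_span_singleton_self g⟩ : R ∙ g) = 0)

theorem Aleph1Free.free_map_of_countable (hN : Aleph1Free R N) (ψ : M →ₗ[R] N)
    {p : Submodule R M} (hp : (p : Set M).Countable) : Module.Free R (p.map ψ) :=
  hN _ ⟨ψ '' p, hp.image ψ, by rw [Submodule.span_image, Submodule.span_eq]⟩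

theorem one_lt_omegaOne : 1 < omegaOne :=
  Ordinal.one_lt_of_isSuccLimit (Cardinal.isSuccLimit_ord (Cardinal.aleph0_le_aleph 1))

namespace IsTypeIFiltration

variable [IsDomain R] {c : Ordinal.{0} → Submodule R G} {ψ : G →ₗ[R] N}

theorem succ_le_ker (hc : IsTypeIFiltration c) (hN : Aleph1Free R N) {β : Ordinal.{0}}
    (hβ : 0 < β) (hβ1 : β + 1 < omegaOne) (h : c β ≤ LinearMap.ker ψ) :
    c (β + 1) ≤ LinearMap.ker ψ := by
  have := hN.noZeroSMulDivisors
  have hφ := Submodule.range_liftQ ((c β).comap (c (β + 1)).subtype)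
    (ψ ∘ₗ (c (β + 1)).subtype) fun _ hx => h hx
  rw [LinearMap.range_comp, Submodule.range_subtype] at hφ
  set φ : SubQuot (c β) (c (β + 1)) →ₗ[R] N := Submodule.liftQ _ _ _
  have : Module.Free R (LinearMap.range φ) :=
    hφ ▸ hN.free_map_of_countable ψ (hc.1.countable _ hβ1)
  rw [LinearMap.le_ker_iff_map, ← hφ, LinearMap.range_eq_bot]
  exact (hc.2.2 β hβ ((lt_add_one β).trans hβ1)).eq_zero_of_free_range φ

theorem le_ker_of_le_ker_one (hc : IsTypeIFiltration c) (hN : Aleph1Free R N)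
    (h1 : c 1 ≤ LinearMap.ker ψ) : ∀ α < omegaOne, c α ≤ LinearMap.ker ψ := by
  intro α
  induction α using Ordinal.limitRecOn with
  | zero => exact fun _ => (hc.1.mono zero_le_one one_lt_omegaOne).trans h1
  | add_one β ih =>
    intro hβ1
    rcases eq_zero_or_pos β with rfl | hβ
    · rwa [zero_add]
    · exact hc.succ_le_ker hN hβ hβ1 (ih ((lt_add_one β).trans hβ1))
  | limit α hα ih =>
    intro hαω
    rw [hc.1.continuous α hαω hα]
    exact iSup₂_le fun β hβ => ih β hβ (lt_trans hβ hαω)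

theorem eq_zero_of_le_ker_one (hc : IsTypeIFiltration c) (hN : Aleph1Free R N)
    (h1 : c 1 ≤ LinearMap.ker ψ) : ψ = 0 := by
  ext g
  obtain ⟨α, hα, hg⟩ := hc.1.union g
  exact hc.le_ker_of_le_ker_one hN h1 α hα hg

end IsTypeIFiltration

end

theorem stmt11_general (R : Subring ℚ) (G : Type*) [AddCommGroup G] [Module R G]
    (hfree : Aleph1Free R G)
    (c : Ordinal.{0} → Submodule R G) (hc : IsTypeIFiltration c)
    (H : Type*) [AddCommGroup H] [Module R H]
    (h : H →ₗ[R] G)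
    (e : G ≃ₗ[R] ↥(LinearMap.ker h))
    (σ σ' : G →ₗ[R] H)
    (hσ : h.comp σ = LinearMap.id) (hσ' : h.comp σ' = LinearMap.id)
    (hagree : ∀ x ∈ c 1, σ x = σ' x) :
    σ = σ' := by
  have hδ : ∀ g, (σ - σ') g ∈ LinearMap.ker h := fun g => by
    rw [LinearMap.mem_ker, LinearMap.sub_apply, map_sub, ← LinearMap.comp_apply, hσ,
      ← LinearMap.comp_apply, hσ', sub_self]
  let ψ : G →ₗ[R] G := e.symm.toLinearMap ∘ₗ (σ - σ').codRestrict _ hδ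
  have hψ : LinearMap.ker ψ = LinearMap.ker (σ - σ') := by
    rw [LinearMap.ker_comp_of_ker_eq_bot _ e.symm.ker, LinearMap.ker_codRestrict]
  have h1 : c 1 ≤ LinearMap.ker ψ := fun x hx => by
    rw [hψ, LinearMap.mem_ker, LinearMap.sub_apply, sub_eq_zero]
    exact hagree x hx
  rw [← sub_eq_zero, ← LinearMap.ker_eq_top, ← hψ, LinearMap.ker_eq_top]
  exact hc.eq_zero_of_le_ker_one hfree h1

/-- Uniqueness of extensions of splitting maps along a type I filtration. -/
theorem stmt11 (R : Subring ℚ) (G : Type*) [AddCommGroup G] [Module R G]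
    (hfree : Aleph1Free R G) (hcard : Cardinal.mk G = Cardinal.aleph 1)
    (c : Ordinal.{0} → Submodule R G) (hc : IsTypeIFiltration c)
    (H : Type*) [AddCommGroup H] [Module R H]
    (h : H →ₗ[R] G) (hsurj : Function.Surjective h)
    (e : G ≃ₗ[R] ↥(LinearMap.ker h))
    (d : Ordinal.{0} → Submodule R H)
    (hker : ∀ α < omegaOne, LinearMap.ker h ≤ d α)
    (hmono : ∀ ⦃α β : Ordinal.{0}⦄, α ≤ β → β < omegaOne → d α ≤ d β)
    (hcont : ∀ α < omegaOne, Order.IsSuccLimit α → d α = ⨆ β ∈ Set.Iio α, d β)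
    (hunion : ∀ x : H, ∃ α < omegaOne, x ∈ d α)
    (hmap : ∀ α < omegaOne, (d α).map h = c α)
    (σ σ' : G →ₗ[R] H)
    (hσ : h.comp σ = LinearMap.id) (hσ' : h.comp σ' = LinearMap.id)
    (hagree : ∀ x ∈ c 1, σ x = σ' x) :
    σ = σ' :=
  stmt11_general R G hfree c hc H h e σ σ' hσ hσ' hagree
end
end

section
/- Let R be a subring of ℚ and G an R-module. Then every short exact sequence of R-modules 0 → G → X → G → 0 splits if and only if every short exact sequence of abelian groups 0 → G → X → G → 0 splits; that is, Ext¹_R(G,G) = 0 if and only if Ext¹_ℤ(G,G) = 0. -/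
noncomputable section

open Cardinal

universe u v

variable {R : Type u} [CommRing R] {G : Type v} [AddCommGroup G] [Module R G]

/-! A subring `R` of `ℚ` is the localization of `ℤ` at the integers invertible in `R`: by Bézout,
the denominator of each `q ∈ R` is one of them. Over a localization of `ℤ`, additive maps between
modules are automatically linear, and an abelian group is a module as soon as the inverted integers
act bijectively on it. In an extension `0 → G → X → G → 0` of groups they act bijectively on `X` by
the five lemma, so group extensions of `G` by `G` are the same as `R`-module extensions, with the
same splittings. -/

namespace Subring

variable (R : Subring ℚ)

def intUnits : Submonoid ℤ := (IsUnit.submonoid R).comap (algebraMap ℤ R)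

theorem isUnit_den (q : R) : IsUnit (((q : ℚ).den : ℤ) : R) := by
  obtain ⟨u, v, h⟩ := Rat.isCoprime_num_den (q : ℚ)
  refine IsUnit.of_mul_eq_one ((u : R) * q + (v : R)) (Subtype.ext ?_)
  have hq : (u : ℚ) * ((q : ℚ) * (q : ℚ).den) + v * (q : ℚ).den = 1 := by
    rw [Rat.mul_den_eq_num]; exact_mod_cast h
  push_cast
  linear_combination hq

instance isLocalization_intUnits : IsLocalization R.intUnits R where
  map_units y := y.2
  surj q := ⟨((q : ℚ).num, ⟨(q : ℚ).den, R.isUnit_den q⟩), Subtype.ext (by simp)⟩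
  exists_of_eq h := ⟨1, by simpa using congrArg (fun r : R => (r : ℚ)) h⟩

end Subring

theorem isLocalizedModule_id_of_bijective {A M : Type*} [CommRing A] [AddCommGroup M]
    [Module A M] (S : Submonoid A) (h : ∀ s ∈ S, Function.Bijective fun x : M => s • x) :
    IsLocalizedModule S (LinearMap.id : M →ₗ[A] M) where
  map_units s := (Module.End.isUnit_iff _).2 (h s s.2)
  surj y := ⟨(y, 1), one_smul _ _⟩
  exists_of_eq h := ⟨1, congrArg _ h⟩

theorem Function.Exact.bijective_smul {A M₁ M₂ M₃ : Type*} [CommRing A] [AddCommGroup M₁]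
    [AddCommGroup M₂] [AddCommGroup M₃] [Module A M₁] [Module A M₂] [Module A M₃]
    {f : M₁ →ₗ[A] M₂} {g : M₂ →ₗ[A] M₃} (hfg : Function.Exact f g)
    (hf : Function.Injective f) (hg : Function.Surjective g) (a : A)
    (h₁ : Function.Bijective fun x : M₁ => a • x) (h₃ : Function.Bijective fun x : M₃ => a • x) :
    Function.Bijective fun x : M₂ => a • x := by
  have hf' := (LinearMap.exact_zero_iff_injective Unit f).2 hf
  have hg' := (LinearMap.exact_zero_iff_surjective Unit g).2 hg
  exact LinearMap.bijective_of_surjective_of_bijective_of_bijective_of_injective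
    (0 : Unit →ₗ[A] M₁) f g (0 : M₃ →ₗ[A] Unit) 0 f g 0
    (0 : Unit →ₗ[A] Unit) (a • .id) (a • .id) (a • .id) (0 : Unit →ₗ[A] Unit)
    (by simp) (by ext; simp) (by ext; simp) (LinearMap.ext fun _ => rfl)
    hf' hfg hg' hf' hfg hg' (fun _ => ⟨0, Subsingleton.elim (α := Unit) _ _⟩) h₁ h₃
    (fun _ _ _ => rfl)

theorem bijective_smul_of_isLocalization {R A M : Type*} [CommRing R] [CommRing A] [Algebra R A]
    (S : Submonoid R) [IsLocalization S A] [AddCommGroup M] [Module R M] [Module A M]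
    [IsScalarTower R A M] {s : R} (hs : s ∈ S) : Function.Bijective fun x : M => s • x :=
  (Module.End.isUnit_iff _).1 ((isLocalizedModule_id S M A).map_units ⟨s, hs⟩)

section LocalizationOfInt

variable {A : Type*} [CommRing A] {G : Type*} [AddCommGroup G] [Module A G]

theorem IsGroupSplitter.isSplitter (S : Submonoid ℤ) [IsLocalization S A]
    (hG : IsGroupSplitter G) : IsSplitter A G := by
  intro X _ _ β α hβ hα hβα
  have hexact : Function.Exact β α := LinearMap.exact_iff.2 hβα.symm
  obtain ⟨γ, hγ⟩ := hG X β α hβ hα (AddMonoidHom.exact_iff.1 hexact).symm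
  exact ⟨γ.toIntLinearMap.extendScalarsOfIsLocalization S A,
    LinearMap.ext fun g => DFunLike.congr_fun hγ g⟩

theorem IsSplitter.isGroupSplitter (S : Submonoid ℤ) [IsLocalization S A]
    (hG : IsSplitter A G) : IsGroupSplitter G := by
  intro X _ β α hβ hα hβα
  have hexact : Function.Exact β.toIntLinearMap α.toIntLinearMap :=
    AddMonoidHom.exact_iff.2 hβα.symm
  have := isLocalizedModule_id_of_bijective S fun s hs =>
    hexact.bijective_smul hβ hα s (bijective_smul_of_isLocalization (A := A) S hs)
      (bijective_smul_of_isLocalization (A := A) S hs)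
  let : Module A X := IsLocalizedModule.module S (LinearMap.id : X →ₗ[ℤ] X)
  let βA := β.toIntLinearMap.extendScalarsOfIsLocalization S A
  let αA := α.toIntLinearMap.extendScalarsOfIsLocalization S A
  obtain ⟨γ, hγ⟩ := hG X βA αA hβ hα ((LinearMap.exact_iff (f := βA) (g := αA)).1 hexact).symm
  exact ⟨γ.toAddMonoidHom, AddMonoidHom.ext fun g => LinearMap.congr_fun hγ g⟩

end LocalizationOfInt

/-- `Ext¹_R(G,G) = 0` if and only if `Ext¹_ℤ(G,G) = 0`: an `R`-module is a splitter
as an `R`-module iff it is a splitter as an abelian group. -/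
theorem stmt18 (R : Subring ℚ) (G : Type*) [AddCommGroup G] [Module R G] :
    IsSplitter R G ↔ IsGroupSplitter G :=
  ⟨IsSplitter.isGroupSplitter R.intUnits, IsGroupSplitter.isSplitter R.intUnits⟩
end
end
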